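/- If a partial sub-chain M' of a Markov chain M satisfies Pr^{M'}(◇T | ¬◇U) ≥ λ, then Pr^{M}(◇T | ¬◇U) ≥ λ, where M' is obtained from M by making expandable states absorbing, T and U contain no expandable states, and the conditional probability is defined as Pr(◇T ∧ ¬◇U)/(1 − Pr(◇U)) with the convention that the inequality holds vacuously only when the denominator is positive in both chains. -/

import Mathlib

open scoped ENNReal Classical

/-- Probability of hitting the set `T` within `n` steps, starting from a given state,
for the transition function `P` (standard value iteration for reachability). -/
noncomputable def hitVal {S : Type*} (P : S → S → ℝ≥0∞) (T : Set S) : ℕ → S → ℝ≥0∞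
  | 0, s => if s ∈ T then 1 else 0
  | n + 1, s => if s ∈ T then 1 else ∑' t, P s t * hitVal P T n t

/-- Probability of eventually hitting the set `T`, starting from `s`. -/
noncomputable def hitProb {S : Type*} (P : S → S → ℝ≥0∞) (T : Set S) (s : S) : ℝ≥0∞ :=
  ⨆ n, hitVal P T n s

/-- Probability of hitting `T` within `n` steps while avoiding `U`, starting from a
given state (constrained reachability `◇T ∧ ¬◇U`). -/
noncomputable def chitVal {S : Type*} (P : S → S → ℝ≥0∞) (T U : Set S) : ℕ → S → ℝ≥0∞
  | 0, s => if s ∈ U then 0 else if s ∈ T then 1 else 0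
  | n + 1, s => if s ∈ U then 0 else if s ∈ T then 1 else ∑' t, P s t * chitVal P T U n t

/-- Probability of eventually hitting `T` before ever visiting `U`, starting from `s`. -/
noncomputable def chitProb {S : Type*} (P : S → S → ℝ≥0∞) (T U : Set S) (s : S) : ℝ≥0∞ :=
  ⨆ n, chitVal P T U n s

/-- Expected reward accumulated within `n` steps before hitting the target set `T`
(the reward of a state is earned upon leaving it). -/
noncomputable def erVal {S : Type*} (P : S → S → ℝ≥0∞) (rew : S → ℝ≥0∞) (T : Set S) :
    ℕ → S → ℝ≥0∞
  | 0, _ => 0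
  | n + 1, s => if s ∈ T then 0 else rew s + ∑' t, P s t * erVal P rew T n t

/-- Total expected reward accumulated until hitting `T`, starting from `s`
(paths never reaching `T` contribute their full accumulated reward). -/
noncomputable def erProb {S : Type*} (P : S → S → ℝ≥0∞) (rew : S → ℝ≥0∞) (T : Set S)
    (s : S) : ℝ≥0∞ :=
  ⨆ n, erVal P rew T n s

/-- A state of `S'` is expandable if it has a transition of `P` leaving `S'`. -/
def Expandable {S : Type*} (P : S → S → ℝ≥0∞) (S' : Set S) (s : S) : Prop :=
  s ∈ S' ∧ ∃ t, t ∉ S' ∧ P s t ≠ 0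

/-- `P'` is the transition function of the partial sub-chain of `P` determined by the
subset `S'`: every expandable state gets a self-loop with probability 1, and all
other states of `S'` keep their transitions. -/
def IsPartialOf {S : Type*} (P' P : S → S → ℝ≥0∞) (S' : Set S) : Prop :=
  (∀ s, Expandable P S' s → ∀ t, P' s t = if t = s then 1 else 0) ∧
  (∀ s ∈ S', ¬ Expandable P S' s → ∀ t, P' s t = P s t)

/-! The `n`-step values of `M'` are bounded by those of `M` at every state of `S'`, by induction
on `n`: at a non-expandable state both chains take the same step, and it stays inside `S'`;
at an expandable state `M'` stands still, while the values of `M` grow with the horizon.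
So passing from `M'` to `M` raises `Pr(◇T ∧ ¬◇U)` and lowers `1 - Pr(◇U)`. -/

section PartialSubchain

variable {S : Type*}

theorem hitVal_eq_chitVal_empty (P : S → S → ℝ≥0∞) (T : Set S) (n : ℕ) (s : S) :
    hitVal P T n s = chitVal P T ∅ n s := by
  induction n generalizing s with
  | zero => simp [hitVal, chitVal]
  | succ n ih => simp [hitVal, chitVal, ih]

theorem hitProb_eq_chitProb_empty (P : S → S → ℝ≥0∞) (T : Set S) (s : S) :
    hitProb P T s = chitProb P T ∅ s := by
  simp only [hitProb, chitProb, hitVal_eq_chitVal_empty]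

theorem chitVal_le_succ (P : S → S → ℝ≥0∞) (T U : Set S) (n : ℕ) (s : S) :
    chitVal P T U n s ≤ chitVal P T U (n + 1) s := by
  induction n generalizing s with
  | zero => by_cases hU : s ∈ U <;> by_cases hT : s ∈ T <;> simp [chitVal, hU, hT]
  | succ n ih =>
    by_cases hU : s ∈ U
    · simp [chitVal, hU]
    by_cases hT : s ∈ T
    · simp [chitVal, hT]
    simp only [chitVal, if_neg hU, if_neg hT]
    exact ENNReal.tsum_le_tsum fun t => mul_le_mul_right (ih t) _

theorem tsum_mul_le_of_isPartialOf {P P' : S → S → ℝ≥0∞} {S' : Set S}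
    (hpart : IsPartialOf P' P S') {s : S} (hs : s ∈ S') (hne : ¬ Expandable P S' s)
    {f g : S → ℝ≥0∞} (hfg : ∀ t ∈ S', f t ≤ g t) :
    ∑' t, P' s t * f t ≤ ∑' t, P s t * g t := by
  refine ENNReal.tsum_le_tsum fun t => ?_
  rw [hpart.2 s hs hne t]
  by_cases hst : P s t = 0
  · simp [hst]
  · have ht : t ∈ S' := by_contra fun ht => hne ⟨hs, t, ht, hst⟩
    exact mul_le_mul_right (hfg t ht) _

theorem chitVal_le_of_isPartialOf {P P' : S → S → ℝ≥0∞} {S' : Set S}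
    (hpart : IsPartialOf P' P S') (T U : Set S) (n : ℕ) :
    ∀ s ∈ S', chitVal P' T U n s ≤ chitVal P T U n s := by
  induction n with
  | zero => exact fun _ _ => le_rfl
  | succ n ih =>
    intro s hs
    by_cases hU : s ∈ U
    · simp [chitVal, hU]
    by_cases hT : s ∈ T
    · simp [chitVal, hT]
    by_cases hexp : Expandable P S' s
    · calc chitVal P' T U (n + 1) s
          = chitVal P' T U n s := by simp [chitVal, hU, hT, hpart.1 s hexp, ite_mul]
        _ ≤ chitVal P T U n s := ih s hs
        _ ≤ chitVal P T U (n + 1) s := chitVal_le_succ P T U n s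
    · simp only [chitVal, if_neg hU, if_neg hT]
      exact tsum_mul_le_of_isPartialOf hpart hs hexp ih

theorem chitProb_le_of_isPartialOf {P P' : S → S → ℝ≥0∞} {S' : Set S}
    (hpart : IsPartialOf P' P S') (T U : Set S) {s : S} (hs : s ∈ S') :
    chitProb P' T U s ≤ chitProb P T U s :=
  iSup_mono fun n => chitVal_le_of_isPartialOf hpart T U n s hs

theorem hitProb_le_of_isPartialOf {P P' : S → S → ℝ≥0∞} {S' : Set S}
    (hpart : IsPartialOf P' P S') (T : Set S) {s : S} (hs : s ∈ S') :
    hitProb P' T s ≤ hitProb P T s := by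
  simpa only [hitProb_eq_chitProb_empty] using chitProb_le_of_isPartialOf hpart T ∅ hs

end PartialSubchain

theorem stmt_11_general {S : Type*} (P P' : S → S → ℝ≥0∞)
    (S' : Set S) (init : S) (hinit : init ∈ S')
    (hpart : IsPartialOf P' P S')
    (T U : Set S)
    (lam : ℝ≥0∞)
    (hlb : lam ≤ chitProb P' T U init / (1 - hitProb P' U init)) :
    lam ≤ chitProb P T U init / (1 - hitProb P U init) :=
  hlb.trans <| ENNReal.div_le_div (chitProb_le_of_isPartialOf hpart T U hinit)
    (tsub_le_tsub_left (hitProb_le_of_isPartialOf hpart U hinit) 1)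

/-- If a partial sub-chain `M'` of a countable-state Markov chain `M` (expandable states
made absorbing; `T` and `U` contain no expandable states) satisfies
`Pr^{M'}(◇T | ¬◇U) ≥ λ`, where the conditional probability is
`Pr(◇T ∧ ¬◇U) / (1 - Pr(◇U))` and both denominators are positive
(`Pr(◇U) < 1` in both chains), then `Pr^{M}(◇T | ¬◇U) ≥ λ`. -/
theorem stmt_11 {S : Type*} [Countable S] (P P' : S → S → ℝ≥0∞)
    (hP : ∀ s, ∑' t, P s t = 1) (hP' : ∀ s, ∑' t, P' s t = 1)
    (S' : Set S) (init : S) (hinit : init ∈ S')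
    (hpart : IsPartialOf P' P S')
    (T U : Set S) (hTU : Disjoint T U) (hT : T ⊆ S') (hU : U ⊆ S')
    (hTexp : ∀ s ∈ T, ¬ Expandable P S' s) (hUexp : ∀ s ∈ U, ¬ Expandable P S' s)
    (hden' : hitProb P' U init < 1) (hden : hitProb P U init < 1)
    (lam : ℝ≥0∞)
    (hlb : lam ≤ chitProb P' T U init / (1 - hitProb P' U init)) :
    lam ≤ chitProb P T U init / (1 - hitProb P U init) :=
  stmt_11_general P P' S' init hinit hpart T U lam hlb
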